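/- Consider n bidders with monotone valuations v_i : Sⁿ → ℝ≥0 (S a linearly ordered signal space with minimum 0) where each v_i is d-critical, and a matroid M on [n]. Fix a signal profile s. Let I* be the maximum-weight independent set chosen greedily under true values v_i(s) with a fixed tie-breaking rule, and let 𝒞 be the set of bidders i that are chosen by the greedy algorithm when run with the weight function w_i given by w_i(i) = v_i(s) and w_i(j) = v_j(s_{-i}, 0_i) for j ≠ i (same tie-breaking). Then I* ⊆ 𝒞. -/

import Mathlib

open Finset
open scoped Classical

variable {n : ℕ}

/-- The list of indices sorted in nonincreasing order of weight,
breaking ties in favor of lower indices. -/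
noncomputable def sortedList (n : ℕ) (w : Fin n → ℝ) : List (Fin n) :=
  (List.finRange n).mergeSort (fun a b => decide (w b < w a ∨ (w a = w b ∧ a ≤ b)))

/-- Greedy: process the list in order, adding an element whenever independence is kept. -/
noncomputable def greedyAux (Indep : Finset (Fin n) → Prop) :
    List (Fin n) → Finset (Fin n) → Finset (Fin n)
  | [], I => I
  | a :: l, I => greedyAux Indep l (if Indep (insert a I) then insert a I else I)

/-- The greedy algorithm on a matroid with weights `w`. -/
noncomputable def greedy (Indep : Finset (Fin n) → Prop) (w : Fin n → ℝ) : Finset (Fin n) :=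
  greedyAux Indep (sortedList n w) ∅

/-- The matroid rank function. -/
noncomputable def rank (Indep : Finset (Fin n) → Prop) (S : Finset (Fin n)) : ℕ :=
  (S.powerset.filter Indep).sup Finset.card

/-- The weight function used to decide whether bidder `i` is a candidate:
`i`'s own real value, and the shadow values (with `i`'s signal zeroed out) of the others. -/
noncomputable def wfun {n : ℕ} (v : Fin n → (Fin n → NNReal) → ℝ)
    (s : Fin n → NNReal) (i : Fin n) : Fin n → ℝ :=
  fun j => if j = i then v i s else v j (Function.update s i 0)

/-! Greedy on a matroid selects `i` exactly when `i` is not spanned by the elements that precede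
it in the sorted order. Lowering the other bidders' weights while keeping `i`'s own weight can
only shrink the set of predecessors of `i`, and matroid closure is monotone, so `i` stays
selected. -/

def sortKey (w : Fin n → ℝ) (a : Fin n) : ℝᵒᵈ ×ₗ Fin n := toLex (OrderDual.toDual (w a), a)

lemma sortKey_le_sortKey_iff {w : Fin n → ℝ} {a b : Fin n} :
    sortKey w a ≤ sortKey w b ↔ w b < w a ∨ (w a = w b ∧ a ≤ b) := by
  simp [sortKey, Prod.Lex.toLex_le_toLex]

lemma sortKey_lt_sortKey_iff {w : Fin n → ℝ} {a b : Fin n} :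
    sortKey w a < sortKey w b ↔ w b < w a ∨ (w a = w b ∧ a < b) := by
  simp [sortKey, Prod.Lex.toLex_lt_toLex]

lemma sortKey_injective (w : Fin n → ℝ) : Function.Injective (sortKey w) :=
  fun _ _ h => congrArg Prod.snd (toLex.injective h)

lemma sortedList_eq_mergeSort_sortKey (w : Fin n → ℝ) :
    sortedList n w =
      (List.finRange n).mergeSort (fun a b => decide (sortKey w a ≤ sortKey w b)) := by
  simp only [sortedList, sortKey_le_sortKey_iff]

lemma pairwise_sortedList (w : Fin n → ℝ) :
    (sortedList n w).Pairwise (fun a b => sortKey w a ≤ sortKey w b) := by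
  rw [sortedList_eq_mergeSort_sortKey]
  simpa using List.pairwise_mergeSort (le := fun a b => decide (sortKey w a ≤ sortKey w b))
    (fun a b c hab hbc => by simp only [decide_eq_true_eq] at *; exact hab.trans hbc)
    (fun a b => by simpa using le_total (sortKey w a) (sortKey w b)) (List.finRange n)

lemma sortedList_perm (w : Fin n → ℝ) : (sortedList n w).Perm (List.finRange n) :=
  List.mergeSort_perm _ _

lemma mem_sortedList (w : Fin n → ℝ) (a : Fin n) : a ∈ sortedList n w :=
  (sortedList_perm w).mem_iff.mpr (List.mem_finRange a)

noncomputable def predecessors (w : Fin n → ℝ) (i : Fin n) : Finset (Fin n) :=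
  univ.filter fun j => sortKey w j < sortKey w i

lemma predecessors_subset_predecessors {w w' : Fin n → ℝ} {i : Fin n} (hle : ∀ j, w' j ≤ w j)
    (heq : w' i = w i) : predecessors w' i ⊆ predecessors w i := by
  intro j
  simp only [predecessors, mem_filter, mem_univ, true_and, sortKey_lt_sortKey_iff]
  rintro (hlt | ⟨hj, hji⟩)
  · exact .inl (heq ▸ hlt.trans_le (hle j))
  · rcases (hle j).lt_or_eq with hlt | heq'
    · exact .inl (heq ▸ hj ▸ hlt)
    · exact .inr ⟨heq'.symm.trans (hj.trans heq), hji⟩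

lemma exists_sortedList_eq_append_cons (w : Fin n → ℝ) (i : Fin n) :
    ∃ l₁ l₂, sortedList n w = l₁ ++ i :: l₂ ∧ l₁.toFinset = predecessors w i ∧ i ∉ l₂ := by
  obtain ⟨l₁, l₂, hl⟩ := List.append_of_mem (mem_sortedList w i)
  have hsorted := pairwise_sortedList w
  rw [hl, List.pairwise_append, List.pairwise_cons] at hsorted
  obtain ⟨-, ⟨hafter, -⟩, hbefore⟩ := hsorted
  have hnodup := (sortedList_perm w).nodup_iff.mpr (List.nodup_finRange n)
  rw [hl, List.nodup_append, List.nodup_cons] at hnodup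
  obtain ⟨-, ⟨hi₂, -⟩, hdisj⟩ := hnodup
  refine ⟨l₁, l₂, hl, ?_, hi₂⟩
  ext j
  simp only [List.mem_toFinset, predecessors, mem_filter, mem_univ, true_and]
  constructor
  · intro hj
    have hji : j ≠ i := hdisj j hj i List.mem_cons_self
    exact (hbefore j hj i List.mem_cons_self).lt_of_ne ((sortKey_injective w).ne hji)
  · intro hj
    have hmem := mem_sortedList w j
    rw [hl, List.mem_append, List.mem_cons] at hmem
    rcases hmem with h | rfl | h
    · exact h
    · exact absurd hj (lt_irrefl _)
    · exact absurd (hafter j h) hj.not_ge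

section Greedy
variable (Indep : Finset (Fin n) → Prop)

lemma greedyAux_append (l₁ l₂ : List (Fin n)) (I : Finset (Fin n)) :
    greedyAux Indep (l₁ ++ l₂) I = greedyAux Indep l₂ (greedyAux Indep l₁ I) := by
  induction l₁ generalizing I with
  | nil => rfl
  | cons a l ih => exact ih _

lemma subset_greedyAux (l : List (Fin n)) (I : Finset (Fin n)) : I ⊆ greedyAux Indep l I := by
  induction l generalizing I with
  | nil => exact Subset.rfl
  | cons a l ih =>
    refine Subset.trans ?_ (ih _)
    split_ifs
    exacts [subset_insert a I, Subset.rfl]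

lemma greedyAux_subset_union (l : List (Fin n)) (I : Finset (Fin n)) :
    greedyAux Indep l I ⊆ I ∪ l.toFinset := by
  induction l generalizing I with
  | nil => simp [greedyAux]
  | cons a l ih =>
    refine (ih _).trans (union_subset ?_ ?_)
    · split_ifs
      · exact insert_subset (by simp) subset_union_left
      · exact subset_union_left
    · exact fun x hx => by simp_all

lemma indep_greedyAux (l : List (Fin n)) {I : Finset (Fin n)} (hI : Indep I) :
    Indep (greedyAux Indep l I) := by
  induction l generalizing I with
  | nil => exact hI
  | cons a l ih =>
    simp only [greedyAux]
    split_ifs with h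
    exacts [ih h, ih hI]

lemma not_indep_insert_greedyAux (hDown : ∀ A B : Finset (Fin n), A ⊆ B → Indep B → Indep A)
    (l : List (Fin n)) (I : Finset (Fin n)) :
    ∀ x ∈ l, x ∉ greedyAux Indep l I → ¬Indep (insert x (greedyAux Indep l I)) := by
  induction l generalizing I with
  | nil => simp
  | cons a l ih =>
    intro x hx hxG hind
    simp only [greedyAux] at hxG hind
    obtain rfl | hx := List.mem_cons.mp hx
    · by_cases h : Indep (insert x I)
      · rw [if_pos h] at hxG
        exact hxG (subset_greedyAux Indep l _ (mem_insert_self x I))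
      · rw [if_neg h] at hind
        exact h (hDown _ _ (insert_subset_insert x (subset_greedyAux Indep l I)) hind)
    · exact ih _ x hx hxG hind

lemma mem_greedyAux_cons_iff {i : Fin n} {l : List (Fin n)} {J : Finset (Fin n)} (hl : i ∉ l)
    (hJ : i ∉ J) : i ∈ greedyAux Indep (i :: l) J ↔ Indep (insert i J) := by
  simp only [greedyAux]
  split_ifs with h
  · exact iff_of_true (subset_greedyAux Indep l _ (mem_insert_self i J)) h
  · refine iff_of_false (fun hi => ?_) h
    have := greedyAux_subset_union Indep l J hi
    simp_all

end Greedy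

section Matroid
variable {α : Type*} [DecidableEq α] (Indep : Finset α → Prop) (hEmpty : Indep ∅)
  (hDown : ∀ A B : Finset α, A ⊆ B → Indep B → Indep A)
  (hExch : ∀ A B : Finset α, Indep A → Indep B → A.card < B.card →
    ∃ x ∈ B, x ∉ A ∧ Indep (insert x A))

def matroidOfIndep : Matroid α :=
  (IndepMatroid.ofFinset Set.univ Indep hEmpty (fun I J hJ hIJ => hDown I J hIJ hJ)
    (fun I J => hExch I J) (fun _ _ => Set.subset_univ _)).matroid

@[simp] lemma matroidOfIndep_indep_coe {I : Finset α} :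
    (matroidOfIndep Indep hEmpty hDown hExch).Indep I ↔ Indep I := by
  simp [matroidOfIndep]

@[simp] lemma matroidOfIndep_ground : (matroidOfIndep Indep hEmpty hDown hExch).E = Set.univ :=
  rfl

lemma matroidOfIndep_isBasis {B P : Finset α} (hBP : B ⊆ P) (hB : Indep B)
    (hmax : ∀ x ∈ P, x ∉ B → ¬Indep (insert x B)) :
    (matroidOfIndep Indep hEmpty hDown hExch).IsBasis B P := by
  refine ((matroidOfIndep_indep_coe ..).mpr hB).isBasis_of_forall_insert (coe_subset.mpr hBP)
    fun x ⟨hxP, hxB⟩ => ?_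
  rw [Matroid.dep_iff, ← coe_insert, matroidOfIndep_indep_coe, matroidOfIndep_ground]
  exact ⟨hmax x hxP hxB, Set.subset_univ _⟩

end Matroid

section GreedyMatroid
variable (Indep : Finset (Fin n) → Prop) (hEmpty : Indep ∅)
  (hDown : ∀ A B : Finset (Fin n), A ⊆ B → Indep B → Indep A)
  (hExch : ∀ A B : Finset (Fin n), Indep A → Indep B → A.card < B.card →
    ∃ x ∈ B, x ∉ A ∧ Indep (insert x A))

lemma isBasis_greedyAux (l : List (Fin n)) :
    (matroidOfIndep Indep hEmpty hDown hExch).IsBasis (greedyAux Indep l ∅) l.toFinset :=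
  matroidOfIndep_isBasis Indep hEmpty hDown hExch (by simpa using greedyAux_subset_union Indep l ∅)
    (indep_greedyAux Indep l hEmpty)
    fun x hx => not_indep_insert_greedyAux Indep hDown l ∅ x (List.mem_toFinset.mp hx)

lemma mem_greedy_iff_notMem_closure (w : Fin n → ℝ) (i : Fin n) :
    i ∈ greedy Indep w ↔
      i ∉ (matroidOfIndep Indep hEmpty hDown hExch).closure (predecessors w i) := by
  obtain ⟨l₁, l₂, hl, hl₁, hl₂⟩ := exists_sortedList_eq_append_cons w i
  have hB := isBasis_greedyAux Indep hEmpty hDown hExch l₁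
  have hiB : i ∉ greedyAux Indep l₁ ∅ := fun h => by
    simpa [hl₁, predecessors] using hB.subset h
  rw [greedy, hl, greedyAux_append, mem_greedyAux_cons_iff Indep hl₂ hiB, ← hl₁,
    ← hB.closure_eq_closure, hB.indep.notMem_closure_iff_of_notMem (by simpa using hiB),
    ← coe_insert, matroidOfIndep_indep_coe]

end GreedyMatroid

lemma wfun_self (v : Fin n → (Fin n → NNReal) → ℝ) (s : Fin n → NNReal) (i : Fin n) :
    wfun v s i i = v i s :=
  if_pos rfl

lemma wfun_le_of_monotone {v : Fin n → (Fin n → NNReal) → ℝ} (hmono : ∀ j, Monotone (v j))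
    (s : Fin n → NNReal) (i j : Fin n) : wfun v s i j ≤ v j s := by
  unfold wfun
  split_ifs with hji
  · rw [hji]
  · exact hmono j (update_le_self_iff.mpr (zero_le (a := s i)))

theorem stmt_14_general {n : ℕ} (Indep : Finset (Fin n) → Prop)
    (hEmpty : Indep ∅)
    (hDown : ∀ A B : Finset (Fin n), A ⊆ B → Indep B → Indep A)
    (hExch : ∀ A B : Finset (Fin n), Indep A → Indep B → A.card < B.card →
      ∃ x ∈ B, x ∉ A ∧ Indep (insert x A))
    (v : Fin n → (Fin n → NNReal) → ℝ)
    (hmono : ∀ i, Monotone (v i))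
    (s : Fin n → NNReal) :
    ∀ i ∈ greedy Indep (fun j => v j s), i ∈ greedy Indep (wfun v s i) := by
  intro i hi
  have hsub := predecessors_subset_predecessors (wfun_le_of_monotone hmono s i) (wfun_self v s i)
  rw [mem_greedy_iff_notMem_closure Indep hEmpty hDown hExch] at hi ⊢
  exact fun h => hi (Matroid.closure_subset_closure _ (coe_subset.mpr hsub) h)

/-- Every bidder in the welfare-maximizing greedy set `I*` (under true values) is a
candidate, i.e. is also selected by the greedy algorithm run with her own real value
and the others' shadow values. -/
theorem stmt_14 {n : ℕ} (Indep : Finset (Fin n) → Prop)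
    (hEmpty : Indep ∅)
    (hDown : ∀ A B : Finset (Fin n), A ⊆ B → Indep B → Indep A)
    (hExch : ∀ A B : Finset (Fin n), Indep A → Indep B → A.card < B.card →
      ∃ x ∈ B, x ∉ A ∧ Indep (insert x A))
    (d : ℕ) (v : Fin n → (Fin n → NNReal) → ℝ)
    (hmono : ∀ i, Monotone (v i))
    (hnonneg : ∀ i t, 0 ≤ v i t)
    (hcrit : ∀ (j : Fin n) (t : Fin n → NNReal),
      (Finset.univ.filter fun k => v j (Function.update t k 0) < v j t).card ≤ d)
    (s : Fin n → NNReal) :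
    ∀ i ∈ greedy Indep (fun j => v j s), i ∈ greedy Indep (wfun v s i) :=
  stmt_14_general Indep hEmpty hDown hExch v hmono s
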